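/- arXiv:1211.5763 — 2 statements merged into one kernel-verified Lean document; each statement's English description precedes it below -/
import Mathlib

section
/- Let R be a commutative Noetherian ring and suppose every R-module is either injective or poor (R has no middle class). Then R is Artinian. -/
universe u

/-- `M` is `N`-injective. -/
def RelInjective (R : Type u) [Ring R] (M N : Type u) [AddCommGroup M] [Module R M]
    [AddCommGroup N] [Module R N] : Prop :=
  ∀ (K : Submodule R N) (f : K →ₗ[R] M), ∃ g : N →ₗ[R] M, ∀ x : K, g x = f x

/-- `M` is poor: whenever `M` is `N`-injective, `N` is semisimple. -/
def Poor (R : Type u) [Ring R] (M : Type u) [AddCommGroup M] [Module R M] : Prop :=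
  ∀ (N : Type u) [AddCommGroup N] [Module R N], RelInjective R M N → IsSemisimpleModule R N

/-- `R` has no middle class: every module is injective or poor. -/
def NoMiddleClass (R : Type u) [Ring R] : Prop :=
  ∀ (M : Type u) [AddCommGroup M] [Module R M], Module.Injective R M ∨ Poor R M

/-!
Every prime of `R` is maximal, which for a Noetherian ring means Artinian. If a prime `P` lies
strictly below a maximal ideal `m`, pick `a ∈ m \ P` and let `I = P + (a²)`. Then `a ∉ I`, so
`R ⧸ I` is not reduced and hence not semisimple. Let `E` be the character module of `R ⧸ I`, a
nonzero injective `R ⧸ I`-module. Viewed over `R`, `E` is `R ⧸ I`-injective, so it is not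
poor. Nor is it injective: `a²` kills `E`, while `ann(a²) ⊆ P ⊆ I` would make every element of
an injective `E` divisible by `a²`, forcing `E = 0`.
-/

open Function

theorem Module.Injective.exists_smul_eq_of_torsionOf_le {R M : Type u} [CommRing R]
    [AddCommGroup M] [Module R M] [Module.Injective R M] {x : R} {m : M}
    (h : Ideal.torsionOf R R x ≤ Ideal.torsionOf R M m) : ∃ m' : M, x • m' = m := by
  let e := Ideal.quotTorsionOfEquivSpanSingleton R R x
  let f := Submodule.liftQ _ (LinearMap.toSpanSingleton R M m) h
  -- `g : R → M` extends `r • x ↦ r • m`, so `x • g 1 = g x = m`.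
  obtain ⟨g, hg⟩ := Module.Injective.extension_property R M _ R (R ∙ x).subtype
    Subtype.val_injective (f ∘ₗ e.symm)
  have hx : e.symm ⟨x, Submodule.mem_span_singleton_self x⟩ = Submodule.Quotient.mk 1 := by
    rw [LinearEquiv.symm_apply_eq, Ideal.quotTorsionOfEquivSpanSingleton_apply_mk, one_smul]
  have hf : f (Submodule.Quotient.mk 1) = m := one_smul R m
  refine ⟨g 1, ?_⟩
  have := LinearMap.congr_fun hg ⟨x, Submodule.mem_span_singleton_self x⟩
  rwa [LinearMap.comp_apply, LinearMap.comp_apply, LinearEquiv.coe_coe, hx, hf,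
    Submodule.subtype_apply, ← mul_one x, ← smul_eq_mul, map_smul] at this

theorem Module.Injective.subsingleton_of_mem_annihilator {R M : Type u} [CommRing R]
    [AddCommGroup M] [Module R M] [Module.Injective R M] {x : R}
    (hx : x ∈ Module.annihilator R M) (h : Ideal.torsionOf R R x ≤ Module.annihilator R M) :
    Subsingleton M := by
  refine subsingleton_of_forall_eq 0 fun m => ?_
  obtain ⟨m', rfl⟩ := Module.Injective.exists_smul_eq_of_torsionOf_le fun r hr =>
    (Ideal.mem_torsionOf_iff ..).2 (Module.mem_annihilator.mp (h hr) m)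
  exact Module.mem_annihilator.mp hx m'

theorem relInjective_of_injective {R S M N : Type u} [CommRing R] [Ring S] [Algebra R S]
    (hS : Surjective (algebraMap R S)) [AddCommGroup M] [Module R M] [Module S M]
    [IsScalarTower R S M] [Module.Injective S M] [AddCommGroup N] [Module R N] [Module S N]
    [IsScalarTower R S N] : RelInjective R M N := by
  intro K f
  let K' : Submodule S N := (Submodule.orderIsoOfAlgebraMapSurjective hS).symm K
  -- `K'` has the same carrier as `K`, so `f` is already an `R`-linear map on it.
  let f' : K' →ₗ[R] M := f
  obtain ⟨g, hg⟩ := Module.Injective.extension_property S M K' N K'.subtype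
    Subtype.val_injective (f'.extendScalarsOfSurjective hS)
  exact ⟨g.restrictScalars R, fun x => LinearMap.congr_fun hg x⟩

theorem isSemisimpleModule_iff_isSemisimpleModule_of_algebraMap_surjective {R S N : Type*}
    [CommRing R] [Ring S] [Algebra R S] [AddCommGroup N] [Module R N] [Module S N]
    [IsScalarTower R S N] (hS : Surjective (algebraMap R S)) :
    IsSemisimpleModule R N ↔ IsSemisimpleModule S N := by
  simp_rw [isSemisimpleModule_iff,
    (Submodule.orderIsoOfAlgebraMapSurjective hS).complementedLattice_iff]

instance CharacterModule.isScalarTower {R A : Type*} [CommRing R] [CommRing A] [Algebra R A] :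
    IsScalarTower R A (CharacterModule A) where
  smul_assoc r s c := by ext y; simp

theorem NoMiddleClass.mem_of_sq_mem {R : Type u} [CommRing R] (h : NoMiddleClass R)
    {I : Ideal R} {a : R} (ha : a ^ 2 ∈ I) (hI : Ideal.torsionOf R R (a ^ 2) ≤ I) :
    a ∈ I := by
  have hS : Surjective (algebraMap R (R ⧸ I)) := Ideal.Quotient.mk_surjective
  have : Module.Injective (R ⧸ I) (CharacterModule (R ⧸ I)) :=
    Module.Flat.iff_characterModule_injective.mp inferInstance
  have hIann : I ≤ Module.annihilator R (CharacterModule (R ⧸ I)) := fun r hr =>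
    Module.mem_annihilator.mpr fun c => by
      rw [← algebraMap_smul (R ⧸ I), Ideal.Quotient.algebraMap_eq,
        Ideal.Quotient.eq_zero_iff_mem.mpr hr, zero_smul]
  rcases h (CharacterModule (R ⧸ I)) with hinj | hpoor
  · have := hinj.subsingleton_of_mem_annihilator (hIann ha) (hI.trans hIann)
    have hItop : I = ⊤ := Ideal.Quotient.subsingleton_iff.mp <|
      subsingleton_of_forall_eq 0 fun y => CharacterModule.eq_zero_of_character_apply fun c => by
        rw [Subsingleton.elim c 0]; rfl
    exact hItop ▸ Submodule.mem_top
  · have hss := hpoor _ (relInjective_of_injective hS (N := R ⧸ I))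
    have : IsSemisimpleRing (R ⧸ I) :=
      (isSemisimpleModule_iff_isSemisimpleModule_of_algebraMap_surjective hS).mp hss
    -- a commutative semisimple ring is reduced
    rw [← Ideal.Quotient.eq_zero_iff_mem]
    exact IsReduced.eq_zero _ ⟨2, by rw [← map_pow, Ideal.Quotient.eq_zero_iff_mem.mpr ha]⟩

theorem Ideal.IsPrime.exists_one_sub_mul_mem_of_mem_sup_span_sq {R : Type*} [CommRing R]
    {P : Ideal R} (hP : P.IsPrime) {a : R} (haP : a ∉ P) (ha : a ∈ P ⊔ Ideal.span {a ^ 2}) :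
    ∃ c, 1 - c * a ∈ P := by
  obtain ⟨p, hp, q, hq, hpq⟩ := Submodule.mem_sup.mp ha
  obtain ⟨c, rfl⟩ := Ideal.mem_span_singleton'.mp hq
  have : a * (1 - c * a) = p := by linear_combination -hpq
  exact ⟨c, (hP.mem_or_mem (this ▸ hp)).resolve_left haP⟩

theorem NoMiddleClass.isMaximal_of_isPrime {R : Type u} [CommRing R] (h : NoMiddleClass R)
    (P : Ideal R) [hP : P.IsPrime] : P.IsMaximal := by
  by_contra hPmax
  obtain ⟨m, hm, hPm⟩ := P.exists_le_maximal hP.ne_top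
  obtain ⟨a, ham, haP⟩ :=
    SetLike.exists_of_lt (lt_of_le_of_ne hPm (by rintro rfl; exact hPmax hm))
  have hann : Ideal.torsionOf R R (a ^ 2) ≤ P ⊔ Ideal.span {a ^ 2} := fun z hz => by
    have hz : z * a ^ 2 = 0 := (Ideal.mem_torsionOf_iff ..).1 hz
    have : z * a ^ 2 ∈ P := hz ▸ P.zero_mem
    exact Ideal.mem_sup_left <| (hP.mem_or_mem this).resolve_right
      fun ha2 => haP (hP.mem_of_pow_mem 2 ha2)
  obtain ⟨c, hc⟩ := hP.exists_one_sub_mul_mem_of_mem_sup_span_sq haP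
    (h.mem_of_sq_mem (Ideal.mem_sup_right (Ideal.mem_span_singleton_self _)) hann)
  exact hm.ne_top <| m.eq_top_iff_one.2 <| by
    simpa using m.add_mem (hPm hc) (m.mul_mem_left c ham)

/-- A commutative Noetherian ring with no middle class is Artinian. -/
theorem stmt_12 (R : Type u) [CommRing R] [IsNoetherianRing R]
    (h : NoMiddleClass R) : IsArtinianRing R := by
  have : Ring.KrullDimLE 0 R := .mk₀ fun P _ => h.isMaximal_of_isPrime P
  exact IsNoetherianRing.isArtinianRing_of_krullDimLE_zero
end

section
/- A commutative local ring R (not necessarily Noetherian) has no simple middle class: its unique simple module R/𝔪 is poor. -/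
/-!
Let `M` be a nonzero module killed by `𝔪` that is `N`-injective, and `x ≠ 0` in `M`. If some
`a ∈ 𝔪` had `a • n ≠ 0`, then, since `R` is local, the annihilator of `a • n` lies in `𝔪`, so
`r • (a • n) ↦ r • x` is a well-defined map `R ∙ (a • n) → M`. An extension `g : N → M` would give
`x = g (a • n) = a • g n = 0`. Hence `𝔪` kills `N`, which is then a vector space over `R ⧸ 𝔪`
and so semisimple. Every simple module over `R` is killed by `𝔪`.
-/

universe u

open IsLocalRing

namespace RelInjective

variable {R : Type u} [Ring R] {M N : Type u} [AddCommGroup M] [Module R M]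
  [AddCommGroup N] [Module R N]

theorem exists_apply_eq_of_torsionOf_le (h : RelInjective R M N) {x : M} {n : N}
    (hle : Ideal.torsionOf R N n ≤ Ideal.torsionOf R M x) : ∃ g : N →ₗ[R] M, g n = x := by
  let f : (R ∙ n) →ₗ[R] M :=
    (Submodule.liftQ _ (LinearMap.toSpanSingleton R M x) hle).comp
      (Ideal.quotTorsionOfEquivSpanSingleton R N n).symm.toLinearMap
  obtain ⟨g, hg⟩ := h (R ∙ n) f
  have hn : (⟨n, Submodule.mem_span_singleton_self n⟩ : R ∙ n) =
      Ideal.quotTorsionOfEquivSpanSingleton R N n (Submodule.Quotient.mk 1) := by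
    rw [Ideal.quotTorsionOfEquivSpanSingleton_apply_mk, one_smul]
  have hf : f ⟨n, Submodule.mem_span_singleton_self n⟩ = x := by
    rw [hn]
    simp only [f, LinearMap.comp_apply, LinearEquiv.coe_coe, LinearEquiv.symm_apply_apply]
    exact one_smul R x
  exact ⟨g, (hg _).trans hf⟩

end RelInjective

theorem Module.IsTorsionBySet.isSemisimpleModule_of_isMaximal {R : Type*} [CommRing R]
    {N : Type*} [AddCommGroup N] [Module R N] {I : Ideal R} [I.IsMaximal]
    (hN : Module.IsTorsionBySet R N I) : IsSemisimpleModule R N := by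
  let := Ideal.Quotient.field I
  let := hN.module
  exact hN.isSemisimpleModule_iff.mp inferInstance

theorem IsLocalRing.torsionOf_le_maximalIdeal {R N : Type*} [CommRing R] [IsLocalRing R]
    [AddCommGroup N] [Module R N] {n : N} (hn : n ≠ 0) :
    Ideal.torsionOf R N n ≤ maximalIdeal R :=
  le_maximalIdeal ((Ideal.torsionOf_eq_top_iff R n).not.mpr hn)

section LocalRing

variable {R : Type u} [CommRing R] [IsLocalRing R] {M N : Type u} [AddCommGroup M] [Module R M]
  [AddCommGroup N] [Module R N]

theorem RelInjective.isTorsionBySet_maximalIdeal [Nontrivial M] (h : RelInjective R M N)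
    (hM : Module.IsTorsionBySet R M (maximalIdeal R)) :
    Module.IsTorsionBySet R N (maximalIdeal R) := by
  intro n ⟨a, ha⟩
  by_contra han
  obtain ⟨x, hx⟩ := exists_ne (0 : M)
  obtain ⟨g, hg⟩ := h.exists_apply_eq_of_torsionOf_le (x := x)
    ((torsionOf_le_maximalIdeal han).trans fun r hr ↦ @hM x ⟨r, hr⟩)
  exact hx (by rw [← hg, map_smul]; exact @hM (g n) ⟨a, ha⟩)

theorem poor_of_isTorsionBySet_maximalIdeal [Nontrivial M]
    (hM : Module.IsTorsionBySet R M (maximalIdeal R)) : Poor R M :=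
  fun _ _ _ h ↦ (h.isTorsionBySet_maximalIdeal hM).isSemisimpleModule_of_isMaximal

theorem IsSimpleModule.isTorsionBySet_maximalIdeal [IsSimpleModule R M] :
    Module.IsTorsionBySet R M (maximalIdeal R) :=
  eq_maximalIdeal (IsSimpleModule.annihilator_isMaximal (R := R) (M := M)) ▸
    Module.isTorsionBySet_annihilator R M

theorem IsSimpleModule.poor (hM : IsSimpleModule R M) : Poor R M :=
  have := IsSimpleModule.nontrivial R M
  poor_of_isTorsionBySet_maximalIdeal IsSimpleModule.isTorsionBySet_maximalIdeal

end LocalRing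

/-- A commutative local ring (not necessarily Noetherian) has no simple middle class:
its unique simple module `R/𝔪` is poor, and hence every simple module is injective or
poor. -/
theorem stmt_14 (R : Type u) [CommRing R] [IsLocalRing R] :
    Poor R (R ⧸ IsLocalRing.maximalIdeal R) ∧
    ∀ (M : Type u) [AddCommGroup M] [Module R M], IsSimpleModule R M →
      Module.Injective R M ∨ Poor R M :=
  ⟨(isSimpleModule_iff_isCoatom.mpr (Ideal.isMaximal_def.mp (maximalIdeal.isMaximal R))).poor,
    fun _ _ _ hM ↦ Or.inr hM.poor⟩
end
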